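/- arXiv:2409.05657 — 2 statements merged into one kernel-verified Lean document; each statement's English description precedes it below -/
import Mathlib

section
/- Let S ⊆ {1,…,n} be a set of k indices, and for each j ∈ S let z_j′ be a perturbed data point; define the perturbed empirical loss ℓ̂′(θ) = (1/n)∑_{i∉S} ℓ(θ, z_i) + (1/n)∑_{j∈S} ℓ(θ, z_j′). Let θ̂ minimize the original empirical loss ℓ̂ and θ̂′ minimize ℓ̂′ over ℝ^d. Assume ℓ̂ is m-strongly convex for some m > 0, and for every j ∈ S, |ℓ(θ̂′, z_j) − ℓ(θ̂, z_j)| ≤ L‖θ̂′ − θ̂‖₂ and |ℓ(θ̂, z_j′) − ℓ(θ̂′, z_j′)| ≤ L‖θ̂′ − θ̂‖₂ for some L > 0. Then ‖θ̂ − θ̂′‖₂ ≤ 4Lk/(m n). -/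
noncomputable section

/-- `f` is `m`-strongly convex on `ℝ^d`: `x ↦ f x - (m/2)‖x‖₂²` is convex. -/
def StrongConvexOnUniv {d : ℕ} (m : ℝ) (f : EuclideanSpace ℝ (Fin d) → ℝ) : Prop :=
  ConvexOn ℝ Set.univ fun x => f x - m / 2 * ‖x‖ ^ 2

/-- The original empirical loss `ℓ̂(θ) = (1/n) ∑ᵢ ℓ(θ, zᵢ)`. -/
def empLoss {d n : ℕ} {Z : Type*} (ℓ : EuclideanSpace ℝ (Fin d) → Z → ℝ)
    (z : Fin n → Z) (θ : EuclideanSpace ℝ (Fin d)) : ℝ :=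
  (1 / (n : ℝ)) * ∑ i, ℓ θ (z i)

/-- The perturbed empirical loss where each data point `z j`, `j ∈ S`, is replaced by `z' j`:
`ℓ̂′(θ) = (1/n) ∑_{i∉S} ℓ(θ, zᵢ) + (1/n) ∑_{j∈S} ℓ(θ, zⱼ′)`. -/
def empLossPertMulti {d n : ℕ} {Z : Type*} (ℓ : EuclideanSpace ℝ (Fin d) → Z → ℝ)
    (z : Fin n → Z) (S : Finset (Fin n)) (z' : Fin n → Z)
    (θ : EuclideanSpace ℝ (Fin d)) : ℝ :=
  (1 / (n : ℝ)) * ∑ i ∈ Finset.univ \ S, ℓ θ (z i) + (1 / (n : ℝ)) * ∑ j ∈ S, ℓ θ (z' j)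

/-!
Strong convexity at the minimizer `θ̂` gives `(m/2)‖θ̂ - θ̂′‖² ≤ ℓ̂(θ̂′) - ℓ̂(θ̂)`. Since `θ̂′`
minimizes `ℓ̂′`, the right side is at most the increment of `ℓ̂ - ℓ̂′` from `θ̂` to `θ̂′`; that
difference involves only the `k` swapped points, so the Lipschitz bounds make the increment at
most `2Lk‖θ̂ - θ̂′‖/n`. Dividing by `‖θ̂ - θ̂′‖` gives the claim.
-/

open Filter Topology

/-- Along the segment from a minimizer `x` to `y`, convexity bounds the decrease of `f` by
`(1 - t) φ ‖x - y‖`; letting `t → 0⁺` recovers the full modulus. -/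
lemma UniformConvexOn.le_sub_of_isMinOn {E : Type*} [NormedAddCommGroup E] [NormedSpace ℝ E]
    {s : Set E} {φ : ℝ → ℝ} {f : E → ℝ} {x y : E} (hf : UniformConvexOn s φ f)
    (hmin : IsMinOn f s x) (hx : x ∈ s) (hy : y ∈ s) :
    φ ‖x - y‖ ≤ f y - f x := by
  have hsegment : ∀ t ∈ Set.Ioo (0 : ℝ) 1, (1 - t) * φ ‖x - y‖ ≤ f y - f x := by
    rintro t ⟨ht₀, ht₁⟩
    have hmem := hf.1 hx hy (sub_nonneg.2 ht₁.le) ht₀.le (sub_add_cancel 1 t)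
    have hconv := hf.2 hx hy (sub_nonneg.2 ht₁.le) ht₀.le (sub_add_cancel 1 t)
    have hmin_seg := isMinOn_iff.1 hmin _ hmem
    simp only [smul_eq_mul] at hconv
    have : t * ((1 - t) * φ ‖x - y‖) ≤ t * (f y - f x) := by nlinarith
    exact le_of_mul_le_mul_left this ht₀
  have hlim : Tendsto (fun t : ℝ => (1 - t) * φ ‖x - y‖) (𝓝[>] 0) (𝓝 (φ ‖x - y‖)) :=
    tendsto_nhdsWithin_of_tendsto_nhds <| by
      simpa using ((continuous_const.sub continuous_id).mul continuous_const).tendsto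
        (0 : ℝ) (f := fun t : ℝ => (1 - t) * φ ‖x - y‖)
  exact le_of_tendsto hlim (Filter.mem_of_superset (Ioo_mem_nhdsGT one_pos) hsegment)

lemma le_two_mul_div_of_mul_sq_le {m c r : ℝ} (hm : 0 < m) (hc : 0 ≤ c) (hr : 0 ≤ r)
    (h : m / 2 * r ^ 2 ≤ c * r) : r ≤ 2 * c / m := by
  rcases hr.eq_or_lt with rfl | hr
  · positivity
  · rw [le_div_iff₀ hm]
    nlinarith

lemma empLoss_sub_empLossPertMulti {d n : ℕ} {Z : Type*} (ℓ : EuclideanSpace ℝ (Fin d) → Z → ℝ)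
    (z : Fin n → Z) (S : Finset (Fin n)) (z' : Fin n → Z) (θ : EuclideanSpace ℝ (Fin d)) :
    empLoss ℓ z θ - empLossPertMulti ℓ z S z' θ =
      1 / (n : ℝ) * ∑ j ∈ S, (ℓ θ (z j) - ℓ θ (z' j)) := by
  rw [empLoss, empLossPertMulti, ← Finset.sum_sdiff (Finset.subset_univ S),
    Finset.sum_sub_distrib]
  ring

lemma empLoss_sub_empLossPertMulti_variation_le {d n : ℕ} {Z : Type*}
    (ℓ : EuclideanSpace ℝ (Fin d) → Z → ℝ) (z : Fin n → Z) (S : Finset (Fin n))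
    (z' : Fin n → Z) (θ θ' : EuclideanSpace ℝ (Fin d)) {δ : ℝ}
    (h₁ : ∀ j ∈ S, |ℓ θ' (z j) - ℓ θ (z j)| ≤ δ) (h₂ : ∀ j ∈ S, |ℓ θ (z' j) - ℓ θ' (z' j)| ≤ δ) :
    (empLoss ℓ z θ' - empLossPertMulti ℓ z S z' θ') - (empLoss ℓ z θ - empLossPertMulti ℓ z S z' θ)
      ≤ 1 / (n : ℝ) * (S.card * (2 * δ)) := by
  rw [empLoss_sub_empLossPertMulti, empLoss_sub_empLossPertMulti, ← mul_sub,
    ← Finset.sum_sub_distrib]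
  gcongr
  calc ∑ j ∈ S, ((ℓ θ' (z j) - ℓ θ' (z' j)) - (ℓ θ (z j) - ℓ θ (z' j)))
      ≤ ∑ _j ∈ S, 2 * δ := Finset.sum_le_sum fun j hj => by
        linarith [le_of_abs_le (h₁ j hj), le_of_abs_le (h₂ j hj)]
    _ = S.card * (2 * δ) := by rw [Finset.sum_const, nsmul_eq_mul]

theorem stmt_3_general {d n k : ℕ} {Z : Type*} (z : Fin n → Z)
    (S : Finset (Fin n)) (hS : S.card = k) (z' : Fin n → Z)
    (ℓ : EuclideanSpace ℝ (Fin d) → Z → ℝ) (m L : ℝ) (hm : 0 < m) (hL : 0 < L)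
    (θhat θhat' : EuclideanSpace ℝ (Fin d))
    (hsc : StrongConvexOnUniv m (empLoss ℓ z))
    (hmin : ∀ θ, empLoss ℓ z θhat ≤ empLoss ℓ z θ)
    (hmin' : ∀ θ, empLossPertMulti ℓ z S z' θhat' ≤ empLossPertMulti ℓ z S z' θ)
    (hlip₁ : ∀ j ∈ S, |ℓ θhat' (z j) - ℓ θhat (z j)| ≤ L * ‖θhat' - θhat‖)
    (hlip₂ : ∀ j ∈ S, |ℓ θhat (z' j) - ℓ θhat' (z' j)| ≤ L * ‖θhat' - θhat‖) :
    ‖θhat - θhat'‖ ≤ 4 * L * k / (m * n) := by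
  have hgrowth : m / 2 * ‖θhat - θhat'‖ ^ 2 ≤ empLoss ℓ z θhat' - empLoss ℓ z θhat :=
    (strongConvexOn_iff_convex.mpr hsc).le_sub_of_isMinOn (fun θ _ => hmin θ)
      (Set.mem_univ _) (Set.mem_univ _)
  have hvariation := empLoss_sub_empLossPertMulti_variation_le ℓ z S z' θhat θhat' hlip₁ hlip₂
  have hquadratic : m / 2 * ‖θhat - θhat'‖ ^ 2 ≤ 2 * L * k / n * ‖θhat - θhat'‖ := by
    rw [hS, norm_sub_rev θhat'] at hvariation
    calc m / 2 * ‖θhat - θhat'‖ ^ 2 ≤ empLoss ℓ z θhat' - empLoss ℓ z θhat := hgrowth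
      _ ≤ 1 / (n : ℝ) * (k * (2 * (L * ‖θhat - θhat'‖))) := by linarith [hmin' θhat]
      _ = 2 * L * k / n * ‖θhat - θhat'‖ := by ring
  calc ‖θhat - θhat'‖ ≤ 2 * (2 * L * k / n) / m :=
        le_two_mul_div_of_mul_sq_le hm (by positivity) (norm_nonneg _) hquadratic
    _ = 4 * L * k / (m * n) := by ring

/-- If `k` data points indexed by `S` are perturbed, `θ̂` minimizes the original empirical
loss, `θ̂′` minimizes the perturbed one, the original empirical loss is `m`-strongly convex,
and the losses at all swapped data points vary Lipschitz-ly between the two minimizers,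
then `‖θ̂ - θ̂′‖₂ ≤ 4Lk/(mn)`. -/
theorem stmt_3 {d n k : ℕ} (hn : 1 ≤ n) {Z : Type*} (z : Fin n → Z)
    (S : Finset (Fin n)) (hS : S.card = k) (z' : Fin n → Z)
    (ℓ : EuclideanSpace ℝ (Fin d) → Z → ℝ) (m L : ℝ) (hm : 0 < m) (hL : 0 < L)
    (θhat θhat' : EuclideanSpace ℝ (Fin d))
    (hsc : StrongConvexOnUniv m (empLoss ℓ z))
    (hmin : ∀ θ, empLoss ℓ z θhat ≤ empLoss ℓ z θ)
    (hmin' : ∀ θ, empLossPertMulti ℓ z S z' θhat' ≤ empLossPertMulti ℓ z S z' θ)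
    (hlip₁ : ∀ j ∈ S, |ℓ θhat' (z j) - ℓ θhat (z j)| ≤ L * ‖θhat' - θhat‖)
    (hlip₂ : ∀ j ∈ S, |ℓ θhat (z' j) - ℓ θhat' (z' j)| ≤ L * ‖θhat' - θhat‖) :
    ‖θhat - θhat'‖ ≤ 4 * L * k / (m * n) :=
  stmt_3_general z S hS z' ℓ m L hm hL θhat θhat' hsc hmin hmin' hlip₁ hlip₂
end
end

section
/- Let θ̂ minimize the original empirical loss ℓ̂ and θ̂′ minimize the perturbed empirical loss ℓ̂′ over ℝ^d, and assume: (i) ℓ̂ and ℓ̂′ are m-strongly convex (m > 0); (ii) |ℓ(θ̂′, z) − ℓ(θ̂, z)| ≤ L‖θ̂′ − θ̂‖₂ for z ∈ {z_j, z_j′} with L > 0; (iii) for every i ∈ {1,…,n}, ‖∇²_θℓ(θ̂′, z_i) − ∇²_θℓ(θ̂, z_i)‖_op ≤ M‖θ̂′ − θ̂‖₂ for some M > 0; and (iv) ‖∇²_θℓ(θ̂′, z_j)‖_op ≤ B and ‖∇²_θℓ(θ̂′, z_j′)‖_op ≤ B for some B > 0. Then the empirical Hessians H(θ̂) and H′(θ̂′)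 are both invertible and ‖H′(θ̂′)^{-1} − H(θ̂)^{-1}‖_op ≤ (4LM + 2Bm)/(m³ n). -/
noncomputable section

/-- The Hessian `∇²f(θ)` of `f : ℝ^d → ℝ` at `θ`, as a linear operator on `ℝ^d`. -/
def hessian {d : ℕ} (f : EuclideanSpace ℝ (Fin d) → ℝ) (θ : EuclideanSpace ℝ (Fin d)) :
    EuclideanSpace ℝ (Fin d) →L[ℝ] EuclideanSpace ℝ (Fin d) :=
  fderiv ℝ (fun x => gradient f x) θ

/-- The perturbed empirical loss `ℓ̂′(θ) = (1/n) ∑_{i≠j} ℓ(θ, zᵢ) + (1/n) ℓ(θ, zⱼ′)`. -/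
def empLossPert {d n : ℕ} {Z : Type*} (ℓ : EuclideanSpace ℝ (Fin d) → Z → ℝ)
    (z : Fin n → Z) (j : Fin n) (z' : Z) (θ : EuclideanSpace ℝ (Fin d)) : ℝ :=
  (1 / (n : ℝ)) * ∑ i ∈ Finset.univ.erase j, ℓ θ (z i) + (1 / (n : ℝ)) * ℓ θ z'

/-- The empirical Hessian `H(θ) = (1/n) ∑ᵢ ∇²_θℓ(θ, zᵢ)`. -/
def empHess {d n : ℕ} {Z : Type*} (ℓ : EuclideanSpace ℝ (Fin d) → Z → ℝ)
    (z : Fin n → Z) (θ : EuclideanSpace ℝ (Fin d)) :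
    EuclideanSpace ℝ (Fin d) →L[ℝ] EuclideanSpace ℝ (Fin d) :=
  (1 / (n : ℝ)) • ∑ i, hessian (fun θ' => ℓ θ' (z i)) θ

/-- The perturbed empirical Hessian
`H′(θ) = (1/n) ∑_{i≠j} ∇²_θℓ(θ, zᵢ) + (1/n) ∇²_θℓ(θ, zⱼ′)`. -/
def empHessPert {d n : ℕ} {Z : Type*} (ℓ : EuclideanSpace ℝ (Fin d) → Z → ℝ)
    (z : Fin n → Z) (j : Fin n) (z' : Z) (θ : EuclideanSpace ℝ (Fin d)) :
    EuclideanSpace ℝ (Fin d) →L[ℝ] EuclideanSpace ℝ (Fin d) :=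
  (1 / (n : ℝ)) • ∑ i ∈ Finset.univ.erase j, hessian (fun θ' => ℓ θ' (z i)) θ +
    (1 / (n : ℝ)) • hessian (fun θ' => ℓ θ' z') θ

/-!
Strong convexity makes both empirical Hessians `m`-coercive, so they are invertible with inverses
of norm at most `1/m`, and the resolvent identity `H′⁻¹ - H⁻¹ = H′⁻¹ (H - H′) H⁻¹` reduces the
claim to a bound on `‖H(θ̂) - H′(θ̂′)‖`. Splitting it through `H(θ̂′)` gives
`M‖θ̂′ - θ̂‖ + 2B/n`. Quadratic growth of the two losses around their minimizers gives
`m‖θ̂′ - θ̂‖² ≤ (ℓ̂ - ℓ̂′)(θ̂′) - (ℓ̂ - ℓ̂′)(θ̂) ≤ 2L‖θ̂′ - θ̂‖/n`, since `ℓ̂ - ℓ̂′` only involves the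
swapped point; hence `‖θ̂′ - θ̂‖ ≤ 2L/(mn)` and the difference of inverses is at most
`(2LM + 2Bm)/(m³n)`.
-/

open Set Filter Topology

section NormedSpace

variable {E : Type*} [NormedAddCommGroup E] [NormedSpace ℝ E] {m : ℝ}

lemma norm_inverse_le_of_mul_norm_le_norm_apply {A : E →L[ℝ] E} (hm : 0 < m)
    (hunit : IsUnit A) (hA : ∀ v, m * ‖v‖ ≤ ‖A v‖) : ‖Ring.inverse A‖ ≤ m⁻¹ := by
  refine ContinuousLinearMap.opNorm_le_bound _ (inv_nonneg.2 hm.le) fun w => ?_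
  have hAw : A (Ring.inverse A w) = w := by
    simpa using DFunLike.congr_fun (Ring.mul_inverse_cancel A hunit) w
  have := hA (Ring.inverse A w)
  rw [hAw] at this
  rwa [inv_mul_eq_div, le_div_iff₀' hm]

lemma norm_inverse_sub_inverse_le_of_mul_norm_le {A A' : E →L[ℝ] E} (hm : 0 < m)
    (hunit : IsUnit A) (hunit' : IsUnit A') (hA : ∀ v, m * ‖v‖ ≤ ‖A v‖)
    (hA' : ∀ v, m * ‖v‖ ≤ ‖A' v‖) :
    ‖Ring.inverse A' - Ring.inverse A‖ ≤ ‖A - A'‖ / m ^ 2 := by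
  rw [Ring.inverse_sub_inverse (iff_of_true hunit' hunit)]
  calc ‖Ring.inverse A' * (A - A') * Ring.inverse A‖
      ≤ ‖Ring.inverse A'‖ * ‖A - A'‖ * ‖Ring.inverse A‖ := norm_mul₃_le
    _ ≤ m⁻¹ * ‖A - A'‖ * m⁻¹ := by
        gcongr
        · exact norm_inverse_le_of_mul_norm_le_norm_apply hm hunit' hA'
        · exact norm_inverse_le_of_mul_norm_le_norm_apply hm hunit hA
    _ = ‖A - A'‖ / m ^ 2 := by field_simp

variable {f g : E → ℝ} {x y : E}

lemma StrongConvexOn.add_mul_sq_norm_sub_le_of_isMinOn (hf : StrongConvexOn univ m f)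
    (hx : IsMinOn f univ x) (y : E) : f x + m / 2 * ‖y - x‖ ^ 2 ≤ f y := by
  have hstep : ∀ a ∈ Ioo (0 : ℝ) 1, f x + (1 - a) * (m / 2 * ‖y - x‖ ^ 2) ≤ f y := by
    rintro a ⟨ha₀, ha₁⟩
    have hconv := hf.2 (mem_univ y) (mem_univ x) ha₀.le (sub_nonneg.2 ha₁.le) (by ring)
    have hmin : f x ≤ f (a • y + (1 - a) • x) := hx (mem_univ _)
    simp only [smul_eq_mul] at hconv
    refine le_of_mul_le_mul_left ?_ ha₀
    linarith
  have hlim : Tendsto (fun a : ℝ => f x + (1 - a) * (m / 2 * ‖y - x‖ ^ 2)) (𝓝[>] 0)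
      (𝓝 (f x + m / 2 * ‖y - x‖ ^ 2)) := by
    have hcont : ContinuousAt (fun a : ℝ => f x + (1 - a) * (m / 2 * ‖y - x‖ ^ 2)) 0 := by
      fun_prop
    simpa using hcont.tendsto.mono_left nhdsWithin_le_nhds
  exact le_of_tendsto hlim (eventually_of_mem (Ioo_mem_nhdsGT one_pos) hstep)

lemma StrongConvexOn.mul_sq_norm_sub_le_of_isMinOn (hf : StrongConvexOn univ m f)
    (hg : StrongConvexOn univ m g) (hx : IsMinOn f univ x) (hy : IsMinOn g univ y) :
    m * ‖y - x‖ ^ 2 ≤ (f y - g y) - (f x - g x) := by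
  have hfy := hf.add_mul_sq_norm_sub_le_of_isMinOn hx y
  have hgx := hg.add_mul_sq_norm_sub_le_of_isMinOn hy x
  rw [norm_sub_rev] at hgx
  linarith

end NormedSpace

section InnerProductSpace

variable {E : Type*} [NormedAddCommGroup E] [InnerProductSpace ℝ E] {m : ℝ} {A : E →L[ℝ] E}

lemma mul_norm_le_norm_apply_of_coercive (hco : ∀ v, m * ‖v‖ ^ 2 ≤ inner ℝ (A v) v) (v : E) :
    m * ‖v‖ ≤ ‖A v‖ := by
  rcases (norm_nonneg v).eq_or_lt with hv | hv
  · simp [← hv]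
  · refine le_of_mul_le_mul_right ?_ hv
    calc m * ‖v‖ * ‖v‖ = m * ‖v‖ ^ 2 := by ring
      _ ≤ inner ℝ (A v) v := hco v
      _ ≤ ‖A v‖ * ‖v‖ := real_inner_le_norm _ _

lemma isUnit_of_mul_norm_le_norm_apply [FiniteDimensional ℝ E] (hm : 0 < m)
    (hA : ∀ v, m * ‖v‖ ≤ ‖A v‖) : IsUnit A := by
  have hinj : Function.Injective A := by
    refine (injective_iff_map_eq_zero A).2 fun v hv => ?_
    have := hA v
    rw [hv, norm_zero] at this
    exact norm_le_zero_iff.1 (nonpos_of_mul_nonpos_right this hm)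
  exact A.isUnit_iff_bijective.2 ⟨hinj, LinearMap.injective_iff_surjective.1 hinj⟩

end InnerProductSpace

lemma ConvexOn.monotone_of_hasDerivAt {f f' : ℝ → ℝ} (hf : ConvexOn ℝ univ f)
    (hd : ∀ t, HasDerivAt f (f' t) t) : Monotone f' := by
  intro s t hst
  rcases hst.eq_or_lt with rfl | hlt
  · rfl
  · exact (hf.le_slope_of_hasDerivAt trivial trivial hlt (hd s)).trans
      (hf.slope_le_of_hasDerivAt trivial trivial hlt (hd t))

lemma Finset.sum_comp_sub_sum_comp_update {ι Z G : Type*} [Fintype ι] [DecidableEq ι]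
    [AddCommGroup G] (f : Z → G) (z : ι → Z) (j : ι) (z' : Z) :
    ∑ i, f (z i) - ∑ i, f (Function.update z j z' i) = f (z j) - f z' := by
  have hrest : ∑ i ∈ univ.erase j, f (Function.update z j z' i) = ∑ i ∈ univ.erase j, f (z i) :=
    sum_congr rfl fun i hi => by rw [Function.update_of_ne (ne_of_mem_erase hi)]
  rw [← add_sum_erase _ _ (mem_univ j), ← add_sum_erase _ _ (mem_univ j), hrest,
    Function.update_self]
  abel

section Euclidean

variable {d : ℕ}

local notation "E" => EuclideanSpace ℝ (Fin d)

lemma contDiff_gradient {f : E → ℝ} (hf : ContDiff ℝ 2 f) : ContDiff ℝ 1 (gradient f) :=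
  (InnerProductSpace.toDual ℝ E).symm.toContinuousLinearEquiv.contDiff.comp
    (hf.fderiv_right (by norm_num))

lemma hasFDerivAt_gradient {f : E → ℝ} (hf : ContDiff ℝ 2 f) (θ : E) :
    HasFDerivAt (gradient f) (hessian f θ) θ :=
  ((contDiff_gradient hf).differentiable one_ne_zero θ).hasFDerivAt

lemma StrongConvexOnUniv.mul_sq_norm_le_inner_hessian {m : ℝ} {f : E → ℝ}
    (hsc : StrongConvexOnUniv m f) (hf : ContDiff ℝ 2 f) (θ v : E) :
    m * ‖v‖ ^ 2 ≤ inner ℝ (hessian f θ v) v := by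
  have hline : ∀ t : ℝ, HasDerivAt (fun s : ℝ => θ + s • v) v t := fun t => by
    simpa using ((hasDerivAt_id t).smul_const v).const_add θ
  set φ : ℝ → ℝ := fun t => inner ℝ (gradient f (θ + t • v)) v - m * inner ℝ (θ + t • v) v
  have hderiv : ∀ t,
      HasDerivAt (fun s : ℝ => f (θ + s • v) - m / 2 * ‖θ + s • v‖ ^ 2) (φ t) t := by
    intro t
    have hf' := (hf.differentiable (by norm_num) _).hasFDerivAt.comp_hasDerivAt t (hline t)
    have hq := ((hline t).norm_sq).const_mul (m / 2)
    refine (hf'.sub hq).congr_deriv ?_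
    rw [← inner_gradient_left]
    ring
  have hmono : Monotone φ := by
    refine ConvexOn.monotone_of_hasDerivAt ?_ hderiv
    refine (hsc.comp_affineMap (AffineMap.lineMap θ (θ + v))).congr fun s _ => ?_
    simp [AffineMap.lineMap_apply, add_comm]
  have hφ : HasDerivAt φ (inner ℝ (hessian f θ v) v - m * ‖v‖ ^ 2) 0 := by
    have hG : HasDerivAt (fun t : ℝ => gradient f (θ + t • v)) (hessian f θ v) 0 := by
      have := (hasFDerivAt_gradient hf (θ + (0 : ℝ) • v)).comp_hasDerivAt 0 (hline 0)
      rw [zero_smul, add_zero] at this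
      exact this
    have hv := hasDerivAt_const (0 : ℝ) v
    refine ((hG.inner ℝ hv).sub (((hline 0).inner ℝ hv).const_mul m)).congr_deriv ?_
    simp
  linarith [hφ.nonneg_of_monotone hmono]

lemma hessian_const_mul_sum {ι : Type*} (s : Finset ι) {F : ι → E → ℝ}
    (hF : ∀ i, ContDiff ℝ 2 (F i)) (c : ℝ) (θ : E) :
    hessian (fun x => c * ∑ i ∈ s, F i x) θ = c • ∑ i ∈ s, hessian (F i) θ := by
  have hgrad : gradient (fun x => c * ∑ i ∈ s, F i x) =
      fun x => c • ∑ i ∈ s, gradient (F i) x := by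
    refine gradient_eq fun x => ?_
    rw [hasGradientAt_iff_hasFDerivAt, map_smul, map_sum]
    simp only [toDual_gradient]
    exact (HasFDerivAt.fun_sum fun i _ =>
      ((hF i).differentiable (by norm_num) x).hasFDerivAt).const_mul c
  unfold hessian
  rw [hgrad]
  exact ((HasFDerivAt.fun_sum fun i _ => hasFDerivAt_gradient (hF i) θ).fun_const_smul c).fderiv

variable {n : ℕ} {Z : Type*} (ℓ : EuclideanSpace ℝ (Fin d) → Z → ℝ) (z : Fin n → Z) (j : Fin n)
  (z' : Z)

lemma empLossPert_eq_empLoss_update :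
    empLossPert ℓ z j z' = empLoss ℓ (Function.update z j z') := by
  funext θ
  unfold empLoss empLossPert
  rw [← Finset.sum_erase_add _ _ (Finset.mem_univ j), Function.update_self, mul_add]
  congr 2
  exact Finset.sum_congr rfl fun i hi => by
    rw [Function.update_of_ne (Finset.ne_of_mem_erase hi)]

lemma empHessPert_eq_empHess_update (θ : E) :
    empHessPert ℓ z j z' θ = empHess ℓ (Function.update z j z') θ := by
  unfold empHess empHessPert
  rw [← Finset.sum_erase_add _ _ (Finset.mem_univ j), Function.update_self, smul_add]
  congr 2
  exact Finset.sum_congr rfl fun i hi => by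
    rw [Function.update_of_ne (Finset.ne_of_mem_erase hi)]

lemma empLoss_sub_empLossPert (θ : E) :
    empLoss ℓ z θ - empLossPert ℓ z j z' θ = 1 / (n : ℝ) * (ℓ θ (z j) - ℓ θ z') := by
  rw [empLossPert_eq_empLoss_update]
  unfold empLoss
  rw [← mul_sub, Finset.sum_comp_sub_sum_comp_update (ℓ θ)]

lemma empHess_sub_empHessPert (θ : E) :
    empHess ℓ z θ - empHessPert ℓ z j z' θ =
      (1 / (n : ℝ)) • (hessian (ℓ · (z j)) θ - hessian (ℓ · z') θ) := by
  rw [empHessPert_eq_empHess_update,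
    ← Finset.sum_comp_sub_sum_comp_update (fun ζ => hessian (ℓ · ζ) θ) z j z', smul_sub]
  rfl

variable {ℓ}

lemma hessian_empLoss (hC2 : ∀ ζ, ContDiff ℝ 2 (ℓ · ζ)) (θ : E) :
    hessian (empLoss ℓ z) θ = empHess ℓ z θ :=
  hessian_const_mul_sum Finset.univ (fun i => hC2 (z i)) (1 / (n : ℝ)) θ

lemma StrongConvexOnUniv.mul_sq_norm_le_inner_empHess {m : ℝ}
    (hC2 : ∀ ζ, ContDiff ℝ 2 (ℓ · ζ)) (hsc : StrongConvexOnUniv m (empLoss ℓ z)) (θ v : E) :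
    m * ‖v‖ ^ 2 ≤ inner ℝ (empHess ℓ z θ v) v := by
  rw [← hessian_empLoss z hC2]
  exact hsc.mul_sq_norm_le_inner_hessian
    (contDiff_const.mul (ContDiff.sum fun i _ => hC2 (z i))) θ v

lemma norm_sub_le_of_isMinOn_empLoss {m L : ℝ} (hm : 0 < m) (hL : 0 ≤ L) {θ θ' : E}
    (hsc : StrongConvexOnUniv m (empLoss ℓ z))
    (hsc' : StrongConvexOnUniv m (empLossPert ℓ z j z'))
    (hmin : IsMinOn (empLoss ℓ z) univ θ) (hmin' : IsMinOn (empLossPert ℓ z j z') univ θ')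
    (hlip₁ : |ℓ θ' (z j) - ℓ θ (z j)| ≤ L * ‖θ' - θ‖)
    (hlip₂ : |ℓ θ z' - ℓ θ' z'| ≤ L * ‖θ' - θ‖) :
    ‖θ' - θ‖ ≤ 2 * L / (m * n) := by
  have hn : (0 : ℝ) < n := Nat.cast_pos.2 j.pos
  have hquad := (strongConvexOn_iff_convex.2 hsc).mul_sq_norm_sub_le_of_isMinOn
    (strongConvexOn_iff_convex.2 hsc') hmin hmin'
  rw [empLoss_sub_empLossPert, empLoss_sub_empLossPert, ← mul_sub] at hquad
  generalize hδ : ‖θ' - θ‖ = δ at *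
  have hsq : m * n * δ * δ ≤ 2 * L * δ := by
    rw [one_div, ← div_eq_inv_mul, le_div_iff₀ hn] at hquad
    linarith [(abs_le.1 hlip₁).2, (abs_le.1 hlip₂).2]
  rw [le_div_iff₀' (by positivity)]
  rcases (hδ ▸ norm_nonneg _ : 0 ≤ δ).eq_or_lt with hδ₀ | hδ₀
  · rw [← hδ₀, mul_zero]; positivity
  · exact le_of_mul_le_mul_right hsq hδ₀

lemma norm_empHess_sub_empHess_le (hn : 0 < n) {θ θ' : E} {K : ℝ}
    (hlip : ∀ i, ‖hessian (ℓ · (z i)) θ' - hessian (ℓ · (z i)) θ‖ ≤ K) :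
    ‖empHess ℓ z θ' - empHess ℓ z θ‖ ≤ K := by
  have hsplit : empHess ℓ z θ' - empHess ℓ z θ =
      (1 / (n : ℝ)) • ∑ i, (hessian (ℓ · (z i)) θ' - hessian (ℓ · (z i)) θ) := by
    unfold empHess
    rw [Finset.sum_sub_distrib, smul_sub]
  calc ‖empHess ℓ z θ' - empHess ℓ z θ‖
      ≤ 1 / (n : ℝ) * ∑ _i : Fin n, K := by
        rw [hsplit, norm_smul, Real.norm_of_nonneg (by positivity)]
        gcongr
        exact norm_sum_le_of_le _ fun i _ => hlip i
    _ = K := by simp [field, hn.ne']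

lemma norm_empHess_sub_empHessPert_le {θ θ' : E} {K B : ℝ}
    (hlip : ∀ i, ‖hessian (ℓ · (z i)) θ' - hessian (ℓ · (z i)) θ‖ ≤ K)
    (hB₁ : ‖hessian (ℓ · (z j)) θ'‖ ≤ B) (hB₂ : ‖hessian (ℓ · z') θ'‖ ≤ B) :
    ‖empHess ℓ z θ - empHessPert ℓ z j z' θ'‖ ≤ K + 2 * B / n := by
  calc ‖empHess ℓ z θ - empHessPert ℓ z j z' θ'‖
      = ‖(empHess ℓ z θ' - empHess ℓ z θ) - (empHess ℓ z θ' - empHessPert ℓ z j z' θ')‖ := by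
        rw [← norm_neg]; congr 1; abel
    _ ≤ K + 1 / (n : ℝ) * (B + B) := by
        refine (norm_sub_le _ _).trans (add_le_add (norm_empHess_sub_empHess_le z j.pos hlip) ?_)
        rw [empHess_sub_empHessPert, norm_smul, Real.norm_of_nonneg (by positivity)]
        gcongr
        exact (norm_sub_le _ _).trans (add_le_add hB₁ hB₂)
    _ = K + 2 * B / n := by ring

end Euclidean

theorem stmt_7_general {d n : ℕ} {Z : Type*} (z : Fin n → Z) (j : Fin n) (z' : Z)
    (ℓ : EuclideanSpace ℝ (Fin d) → Z → ℝ)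
    (hC2 : ∀ zz : Z, ContDiff ℝ 2 (fun θ => ℓ θ zz))
    (m L M B : ℝ) (hm : 0 < m) (hL : 0 < L) (hM : 0 < M)
    (θhat θhat' : EuclideanSpace ℝ (Fin d))
    (hsc : StrongConvexOnUniv m (empLoss ℓ z))
    (hsc' : StrongConvexOnUniv m (empLossPert ℓ z j z'))
    (hmin : ∀ θ, empLoss ℓ z θhat ≤ empLoss ℓ z θ)
    (hmin' : ∀ θ, empLossPert ℓ z j z' θhat' ≤ empLossPert ℓ z j z' θ)
    (hlip₁ : |ℓ θhat' (z j) - ℓ θhat (z j)| ≤ L * ‖θhat' - θhat‖)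
    (hlip₂ : |ℓ θhat z' - ℓ θhat' z'| ≤ L * ‖θhat' - θhat‖)
    (hhessLip : ∀ i : Fin n,
      ‖hessian (fun θ' => ℓ θ' (z i)) θhat' - hessian (fun θ' => ℓ θ' (z i)) θhat‖ ≤
        M * ‖θhat' - θhat‖)
    (hhessB₁ : ‖hessian (fun θ' => ℓ θ' (z j)) θhat'‖ ≤ B)
    (hhessB₂ : ‖hessian (fun θ' => ℓ θ' z') θhat'‖ ≤ B) :
    IsUnit (empHess ℓ z θhat) ∧ IsUnit (empHessPert ℓ z j z' θhat') ∧
      ‖Ring.inverse (empHessPert ℓ z j z' θhat') - Ring.inverse (empHess ℓ z θhat)‖ ≤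
        (4 * L * M + 2 * B * m) / (m ^ 3 * n) := by
  have hn : (0 : ℝ) < n := Nat.cast_pos.2 j.pos
  have hA := mul_norm_le_norm_apply_of_coercive (hsc.mul_sq_norm_le_inner_empHess z hC2 θhat)
  have hA' : ∀ v, m * ‖v‖ ≤ ‖empHessPert ℓ z j z' θhat' v‖ := by
    rw [empLossPert_eq_empLoss_update] at hsc'
    rw [empHessPert_eq_empHess_update]
    exact mul_norm_le_norm_apply_of_coercive (hsc'.mul_sq_norm_le_inner_empHess _ hC2 θhat')
  have hunit := isUnit_of_mul_norm_le_norm_apply hm hA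
  have hunit' := isUnit_of_mul_norm_le_norm_apply hm hA'
  refine ⟨hunit, hunit', ?_⟩
  have hdist := norm_sub_le_of_isMinOn_empLoss z j z' hm hL.le hsc hsc'
    (fun θ _ => hmin θ) (fun θ _ => hmin' θ) hlip₁ hlip₂
  calc ‖Ring.inverse (empHessPert ℓ z j z' θhat') - Ring.inverse (empHess ℓ z θhat)‖
      ≤ ‖empHess ℓ z θhat - empHessPert ℓ z j z' θhat'‖ / m ^ 2 :=
        norm_inverse_sub_inverse_le_of_mul_norm_le hm hunit hunit' hA hA'
    _ ≤ (M * ‖θhat' - θhat‖ + 2 * B / n) / m ^ 2 := by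
        gcongr
        exact norm_empHess_sub_empHessPert_le z j z' hhessLip hhessB₁ hhessB₂
    _ ≤ (M * (2 * L / (m * n)) + 2 * B / n) / m ^ 2 := by gcongr
    _ = (2 * L * M + 2 * B * m) / (m ^ 3 * n) := by field_simp
    _ ≤ (4 * L * M + 2 * B * m) / (m ^ 3 * n) := by gcongr; nlinarith [mul_pos hL hM]

/-- Under strong convexity of both empirical losses, the pointwise Lipschitz bounds on the
swapped losses, the `M`-Lipschitzness of the per-sample Hessians between the two minimizers,
and the `B`-bound on the Hessians at the swapped points, the empirical Hessians `H(θ̂)` and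
`H′(θ̂′)` are both invertible and `‖H′(θ̂′)⁻¹ - H(θ̂)⁻¹‖_op ≤ (4LM + 2Bm)/(m³n)`. -/
theorem stmt_7 {d n : ℕ} (hn : 1 ≤ n) {Z : Type*} (z : Fin n → Z) (j : Fin n) (z' : Z)
    (ℓ : EuclideanSpace ℝ (Fin d) → Z → ℝ)
    (hC2 : ∀ zz : Z, ContDiff ℝ 2 (fun θ => ℓ θ zz))
    (m L M B : ℝ) (hm : 0 < m) (hL : 0 < L) (hM : 0 < M) (hB : 0 < B)
    (θhat θhat' : EuclideanSpace ℝ (Fin d))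
    (hsc : StrongConvexOnUniv m (empLoss ℓ z))
    (hsc' : StrongConvexOnUniv m (empLossPert ℓ z j z'))
    (hmin : ∀ θ, empLoss ℓ z θhat ≤ empLoss ℓ z θ)
    (hmin' : ∀ θ, empLossPert ℓ z j z' θhat' ≤ empLossPert ℓ z j z' θ)
    (hlip₁ : |ℓ θhat' (z j) - ℓ θhat (z j)| ≤ L * ‖θhat' - θhat‖)
    (hlip₂ : |ℓ θhat z' - ℓ θhat' z'| ≤ L * ‖θhat' - θhat‖)
    (hhessLip : ∀ i : Fin n,
      ‖hessian (fun θ' => ℓ θ' (z i)) θhat' - hessian (fun θ' => ℓ θ' (z i)) θhat‖ ≤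
        M * ‖θhat' - θhat‖)
    (hhessB₁ : ‖hessian (fun θ' => ℓ θ' (z j)) θhat'‖ ≤ B)
    (hhessB₂ : ‖hessian (fun θ' => ℓ θ' z') θhat'‖ ≤ B) :
    IsUnit (empHess ℓ z θhat) ∧ IsUnit (empHessPert ℓ z j z' θhat') ∧
      ‖Ring.inverse (empHessPert ℓ z j z' θhat') - Ring.inverse (empHess ℓ z θhat)‖ ≤
        (4 * L * M + 2 * B * m) / (m ^ 3 * n) :=
  stmt_7_general z j z' ℓ hC2 m L M B hm hL hM θhat θhat' hsc hsc' hmin hmin' hlip₁ hlip₂ hhessLip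
    hhessB₁ hhessB₂
end
end
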